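/- arXiv:math/0501031 — 2 statements merged into one kernel-verified Lean document; each statement's English description precedes it below -/
import Mathlib

section
/- Let λ, μ > 0 and for each c > 0 let α(c) > 0 be the unique positive solution of c + λ(1 - e^{α}) + μ(1 - e^{-α}) = 0. Then there exist constants A₁, A₂, A₃, A₄ (depending only on λ, μ) such that for all sufficiently large c, A₁ + log(c + A₂) ≤ α(c) ≤ A₃ + log(c + A₄). -/
/-- Logarithmic growth of the unique positive root `α(c)` of
`c + λ(1 - e^α) + μ(1 - e^{-α}) = 0`: there are constants `A₁,…,A₄`
(depending only on `λ, μ`) such that for all large `c`,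
`A₁ + log(c + A₂) ≤ α(c) ≤ A₃ + log(c + A₄)`. -/
theorem stmt6 (lam mu : ℝ) (hlam : 0 < lam) (hmu : 0 < mu) :
    ∃ A₁ A₂ A₃ A₄ c₀ : ℝ, ∀ c : ℝ, c₀ ≤ c → ∀ α : ℝ, 0 < α →
      c + lam * (1 - Real.exp α) + mu * (1 - Real.exp (-α)) = 0 →
      A₁ + Real.log (c + A₂) ≤ α ∧ α ≤ A₃ + Real.log (c + A₄) := by
  refine ⟨-Real.log lam, lam, -Real.log lam, lam + mu, 1, ?_⟩
  intro c hc α hα h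
  have h1 : 0 < Real.exp (-α) := Real.exp_pos _
  have h2 : Real.exp (-α) < 1 := by
    rw [Real.exp_lt_one_iff]; linarith
  have hlow : c + lam ≤ lam * Real.exp α := by nlinarith
  have hup : lam * Real.exp α ≤ c + lam + mu := by nlinarith
  have hpos : 0 < c + lam := by linarith
  have hlog : Real.log (lam * Real.exp α) = Real.log lam + α := by
    rw [Real.log_mul (ne_of_gt hlam) (ne_of_gt (Real.exp_pos _)), Real.log_exp]
  have hL : Real.log (c + lam) ≤ Real.log (lam * Real.exp α) :=
    Real.log_le_log hpos hlow
  have hU : Real.log (lam * Real.exp α) ≤ Real.log (c + (lam + mu)) := by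
    apply Real.log_le_log (by positivity); linarith
  constructor <;> [linarith [hL]; linarith [hU]]
end

section
/- Let ν be in the simplex S = {ν ∈ ℝ^J : ν_i ≥ 0, Σν_i ≤ 1}, and suppose ν is bounded away from all vertices e_i: ν_i ≤ 1−ε for all i. Let α_i(c) be the unique positive solutions of c + λ_i(1−e^{α_i}) + μ_i(1−e^{−α_i}) = 0 with λ_i, μ_i > 0. Define H̄(ν,c) = c + Σ_i [λ_i(1−e^{ν_i α_i(c)}) + μ_i(1−e^{−ν_i α_i(c)})]. Then for all sufficiently large c (uniformly over such ν), ∂H̄/∂c ≥ 1/2. -/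
set_option maxHeartbeats 2000000 in
/-- Competing queues, key derivative estimate: with `α_i(c)` the unique positive
roots of `c + λ_i(1-e^{α_i}) + μ_i(1-e^{-α_i}) = 0` and
`H̄(ν,c) = c + Σ_i [λ_i(1-e^{ν_i α_i(c)}) + μ_i(1-e^{-ν_i α_i(c)})]`,
for all sufficiently large `c`, uniformly over `ν` in the simplex with
`ν_i ≤ 1-ε`, one has `∂H̄/∂c ≥ 1/2`. -/
theorem stmt19 {J : ℕ} (lam mu : Fin J → ℝ) (hlam : ∀ i, 0 < lam i)
    (hmu : ∀ i, 0 < mu i) (α : ℝ → Fin J → ℝ)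
    (hα : ∀ c : ℝ, 0 < c → ∀ i, 0 < α c i ∧
      c + lam i * (1 - Real.exp (α c i)) + mu i * (1 - Real.exp (-(α c i))) = 0)
    (ε : ℝ) (hε : 0 < ε) :
    ∃ c₁ : ℝ, 0 < c₁ ∧ ∀ c : ℝ, c₁ ≤ c → ∀ ν : Fin J → ℝ,
      (∀ i, 0 ≤ ν i) → (∑ i, ν i) ≤ 1 → (∀ i, ν i ≤ 1 - ε) →
      ∀ D : ℝ,
        HasDerivAt (fun c' : ℝ => c' + ∑ i,
          (lam i * (1 - Real.exp (ν i * α c' i))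
            + mu i * (1 - Real.exp (-(ν i * α c' i))))) D c →
        (1:ℝ)/2 ≤ D := by
  classical
  set M : ℝ := max (Real.log (4*(J+1)) / ε) 0 + ∑ i, |Real.log (2 * mu i / lam i)| / 2
    with hMdef
  have hsum0 : (0:ℝ) ≤ ∑ i, |Real.log (2 * mu i / lam i)| / 2 :=
    Finset.sum_nonneg (fun i _ => by positivity)
  have hM0 : 0 ≤ M := add_nonneg (le_max_right _ _) hsum0
  have hM1 : Real.log (4*(J+1)) ≤ ε * M := by
    have h1 : Real.log (4*(J+1)) / ε ≤ M := le_add_of_le_of_nonneg (le_max_left _ _) hsum0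
    rw [div_le_iff₀ hε] at h1
    linarith [h1]
  have hM2 : ∀ i, Real.log (2 * mu i / lam i) ≤ 2 * M := by
    intro i
    have h1 : |Real.log (2 * mu i / lam i)| / 2 ≤ ∑ j, |Real.log (2 * mu j / lam j)| / 2 :=
      Finset.single_le_sum (f := fun j => |Real.log (2 * mu j / lam j)| / 2)
        (fun j _ => by positivity) (Finset.mem_univ i)
    have h2 := le_abs_self (Real.log (2 * mu i / lam i))
    have h3 : (0:ℝ) ≤ max (Real.log (4*(J+1)) / ε) 0 := le_max_right _ _
    rw [hMdef]; linarith
  have hSnn : (0:ℝ) ≤ ∑ i, lam i := Finset.sum_nonneg (fun i _ => (hlam i).le)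
  have hc₁pos : (0:ℝ) < 1 + Real.exp M * ∑ i, lam i := by
    nlinarith [Real.exp_pos M, hSnn]
  refine ⟨1 + Real.exp M * ∑ i, lam i, hc₁pos, ?_⟩
  intro c hc ν hν0 hνsum hνε D hD
  -- lower bound on α
  have hαM : ∀ c' : ℝ, 1 + Real.exp M * ∑ i, lam i ≤ c' → ∀ i, M ≤ α c' i := by
    intro c' hc' i
    have hc'0 : 0 < c' := lt_of_lt_of_le hc₁pos hc'
    obtain ⟨hpos, heq⟩ := hα c' hc'0 i
    have h1 : Real.exp (-(α c' i)) ≤ 1 := Real.exp_le_one_iff.mpr (by linarith)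
    have h2 : lam i ≤ ∑ j, lam j := Finset.single_le_sum (fun j _ => (hlam j).le)
      (Finset.mem_univ i)
    have h3 : Real.exp M * lam i ≤ c' := by
      nlinarith [Real.exp_pos M]
    -- lam i * (exp α - 1) ≥ c' ≥ exp M * lam i
    have h4 : Real.exp M * lam i ≤ lam i * (Real.exp (α c' i) - 1) := by
      nlinarith [hmu i, h1, heq, h3]
    have h5 : Real.exp M ≤ Real.exp (α c' i) := by
      nlinarith [hlam i, Real.exp_pos M]
    exact Real.exp_le_exp.mp h5
  -- expansion estimate
  have mono : ∀ b : ℝ, c < b →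
      (c + ∑ i, (lam i * (1 - Real.exp (ν i * α c i))
        + mu i * (1 - Real.exp (-(ν i * α c i)))))
      + (b - c)/2
      ≤ b + ∑ i, (lam i * (1 - Real.exp (ν i * α b i))
        + mu i * (1 - Real.exp (-(ν i * α b i)))) := by
    intro b hb
    have hc0 : 0 < c := lt_of_lt_of_le hc₁pos hc
    have hb0 : 0 < b := lt_trans hc0 hb
    have hba : 0 ≤ b - c := by linarith
    have key : ∀ i : Fin J,
        (lam i * (1 - Real.exp (ν i * α c i)) + mu i * (1 - Real.exp (-(ν i * α c i))))
        - (lam i * (1 - Real.exp (ν i * α b i)) + mu i * (1 - Real.exp (-(ν i * α b i))))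
        ≤ (b - c) / (2*(J+1)) := by
      intro i
      obtain ⟨hs0, heqa⟩ := hα c hc0 i
      obtain ⟨ht0, heqb⟩ := hα b hb0 i
      set s := α c i with hs
      set t := α b i with ht
      have hsM : M ≤ s := hαM c hc i
      have htM : M ≤ t := hαM b (le_of_lt (lt_of_le_of_lt hc hb)) i
      -- factorization
      have hid : (Real.exp s - Real.exp t) * (Real.exp (-s) * Real.exp (-t))
          = Real.exp (-t) - Real.exp (-s) := by
        rw [sub_mul, ← Real.exp_add, ← Real.exp_add, ← Real.exp_add]
        rw [show s + (-s + -t) = -t by ring, show t + (-s + -t) = -s by ring]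
      have hfact : b - c = (Real.exp t - Real.exp s)
          * (lam i - mu i * (Real.exp (-s) * Real.exp (-t))) := by
        linear_combination heqb - heqa - mu i * hid
      -- mu * e^{-s}e^{-t} ≤ lam/2
      have hee : Real.exp (-s) * Real.exp (-t) ≤ Real.exp (-(2*M)) := by
        rw [← Real.exp_add]
        exact Real.exp_le_exp.mpr (by linarith)
      have h2mu : 2 * mu i ≤ lam i * Real.exp (2*M) := by
        have h := Real.exp_le_exp.mpr (hM2 i)
        rw [Real.exp_log (div_pos (by linarith [hmu i]) (hlam i))] at h
        rw [div_le_iff₀ (hlam i)] at h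
        linarith
      have hE : Real.exp (-(2*M)) * Real.exp (2*M) = 1 := by
        rw [← Real.exp_add]; simp
      have hml : mu i * (Real.exp (-s) * Real.exp (-t)) ≤ lam i / 2 := by
        have ha1 : mu i * (Real.exp (-s) * Real.exp (-t)) ≤ mu i * Real.exp (-(2*M)) :=
          mul_le_mul_of_nonneg_left hee (hmu i).le
        have ha2 : 2 * mu i * Real.exp (-(2*M)) ≤ lam i * Real.exp (2*M) * Real.exp (-(2*M)) :=
          mul_le_mul_of_nonneg_right h2mu (Real.exp_pos _).le
        have ha3 : lam i * Real.exp (2*M) * Real.exp (-(2*M)) = lam i := by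
          rw [mul_assoc, mul_comm (Real.exp (2*M)), hE, mul_one]
        nlinarith [ha1, ha2, ha3, Real.exp_pos (-(2*M)), (hmu i).le]
      have hΔnn : 0 ≤ Real.exp t - Real.exp s := by
        nlinarith [hfact, hml, hlam i, hba]
      have hst : s ≤ t := Real.exp_le_exp.mp (by linarith)
      have hΔb : lam i * (Real.exp t - Real.exp s) ≤ 2 * (b - c) := by
        nlinarith [hfact, hml, hΔnn]
      -- step 1: e^{νt} - e^{νs} ≤ e^{-εs} (e^t - e^s)
      have p1 : Real.exp (ν i * t) = Real.exp (ν i * s) * Real.exp (ν i * (t - s)) := by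
        rw [← Real.exp_add]; congr 1; ring
      have p2 : Real.exp t = Real.exp s * Real.exp (t - s) := by
        rw [← Real.exp_add]; congr 1; ring
      have p3 : Real.exp (ν i * (t - s)) ≤ Real.exp (t - s) :=
        Real.exp_le_exp.mpr (by nlinarith [hν0 i, hνε i, hst, hε])
      have p4 : Real.exp (ν i * s) ≤ Real.exp (-(ε*s)) * Real.exp s := by
        rw [← Real.exp_add]
        exact Real.exp_le_exp.mpr (by nlinarith [hνε i, hsM, hM0])
      have p5 : (1:ℝ) ≤ Real.exp (t - s) := Real.one_le_exp (by linarith)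
      have q1 : Real.exp (ν i * s) * Real.exp (ν i * (t - s))
          ≤ Real.exp (ν i * s) * Real.exp (t - s) :=
        mul_le_mul_of_nonneg_left p3 (Real.exp_pos _).le
      have q2 : Real.exp (ν i * s) * (Real.exp (t - s) - 1)
          ≤ Real.exp (-(ε*s)) * Real.exp s * (Real.exp (t - s) - 1) :=
        mul_le_mul_of_nonneg_right p4 (by linarith)
      have step1 : Real.exp (ν i * t) - Real.exp (ν i * s)
          ≤ Real.exp (-(ε*s)) * (Real.exp t - Real.exp s) := by
        rw [p1, p2]; nlinarith [q1, q2]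
      -- step 2: e^{-εs} ≤ 1/(4(J+1))
      have hJ : (0:ℝ) < 4*(J+1) := by positivity
      have step2 : Real.exp (-(ε*s)) ≤ 1/(4*(J+1)) := by
        have h1 : Real.log (4*(J+1)) ≤ ε * s := by nlinarith [hM1, hsM, hM0, hε]
        have h2 : (4*((J:ℝ)+1)) ≤ Real.exp (ε*s) := by
          have := Real.exp_le_exp.mpr h1
          rwa [Real.exp_log hJ] at this
        rw [Real.exp_neg, inv_eq_one_div]
        exact one_div_le_one_div_of_le hJ h2
      -- combine: lam (e^{νt} - e^{νs}) ≤ (b-c)/(2(J+1))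
      have hcomb : lam i * (Real.exp (ν i * t) - Real.exp (ν i * s)) ≤ (b - c)/(2*(J+1)) := by
        have h1 : lam i * (Real.exp (ν i * t) - Real.exp (ν i * s))
            ≤ Real.exp (-(ε*s)) * (lam i * (Real.exp t - Real.exp s)) := by
          nlinarith [mul_le_mul_of_nonneg_left step1 (hlam i).le]
        have h2 : Real.exp (-(ε*s)) * (lam i * (Real.exp t - Real.exp s))
            ≤ Real.exp (-(ε*s)) * (2 * (b - c)) :=
          mul_le_mul_of_nonneg_left hΔb (Real.exp_pos _).le
        have h3 : Real.exp (-(ε*s)) * (2 * (b - c)) ≤ (1/(4*(J+1))) * (2 * (b - c)) :=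
          mul_le_mul_of_nonneg_right step2 (by linarith)
        have h4 : (1/(4*((J:ℝ)+1))) * (2 * (b - c)) = (b - c)/(2*(J+1)) := by
          field_simp; ring
        linarith
      -- mu part nonneg
      have hmupart : 0 ≤ mu i * (Real.exp (-(ν i * s)) - Real.exp (-(ν i * t))) := by
        have h5 : Real.exp (-(ν i * t)) ≤ Real.exp (-(ν i * s)) :=
          Real.exp_le_exp.mpr (neg_le_neg (mul_le_mul_of_nonneg_left hst (hν0 i)))
        exact mul_nonneg (hmu i).le (by linarith)
      nlinarith [hcomb, hmupart]
    -- sum it up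
    have hsum : ∑ i, ((lam i * (1 - Real.exp (ν i * α c i)) + mu i * (1 - Real.exp (-(ν i * α c i))))
        - (lam i * (1 - Real.exp (ν i * α b i)) + mu i * (1 - Real.exp (-(ν i * α b i)))))
        ≤ ∑ _i : Fin J, (b - c) / (2*(J+1)) :=
      Finset.sum_le_sum (fun i _ => key i)
    rw [Finset.sum_sub_distrib, Finset.sum_const, Finset.card_univ, Fintype.card_fin,
      nsmul_eq_mul] at hsum
    have e2 : (J:ℝ)/(2*((J:ℝ)+1)) ≤ 1/2 := by
      rw [div_le_div_iff₀ (by positivity) (by norm_num)]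
      have := Nat.cast_nonneg (α := ℝ) J
      linarith
    have e3 : (J:ℝ) * ((b - c)/(2*((J:ℝ)+1))) ≤ (b - c)/2 := by
      have e1 : (J:ℝ) * ((b - c)/(2*((J:ℝ)+1))) = (b - c) * ((J:ℝ)/(2*((J:ℝ)+1))) := by ring
      rw [e1]
      nlinarith [e2, hba]
    linarith [hsum, e3]
  -- derivative conclusion
  rw [hasDerivAt_iff_tendsto_slope] at hD
  have h1 : Filter.Tendsto (slope (fun c' : ℝ => c' + ∑ i,
      (lam i * (1 - Real.exp (ν i * α c' i))
        + mu i * (1 - Real.exp (-(ν i * α c' i))))) c)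
      (nhdsWithin c (Set.Ioi c)) (nhds D) :=
    hD.mono_left (nhdsWithin_mono c (fun x hx => hx.ne'))
  refine ge_of_tendsto h1 (Filter.eventually_of_mem self_mem_nhdsWithin (fun b hb => ?_))
  have hbc : (0:ℝ) < b - c := sub_pos.mpr hb
  rw [slope_def_field, le_div_iff₀ hbc]
  have := mono b hb
  linarith
end
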